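/- arXiv:1311.6250 — 2 statements merged into one kernel-verified Lean document; each statement's English description precedes it below -/
import Mathlib

section
/- The TPTL formula x.F(b ∧ F(c ∧ x ≤ 2)) is not definable in MTL. -/
/-!
Given an MTL formula `φ`, choose `W` larger than the magnitude of every finite interval endpoint
of `φ` and let all data values be multiples of `W`: then the intervals of `φ` only see the sign
of a data difference.
Consider the words `∅ c b c b …` whose first value is `3W`, whose `b`'s carry `0` and whose `c`'s
carry strictly increasing values `W * s n` avoiding `3W`. For `W ≥ 3` such a word satisfies
`x.F(b ∧ F(c ∧ x ≤ 2))` iff at least two of its `c`'s lie below `3W`. But any two of them are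
related by a bisimulation for the until operator that matches positions of the same kind, where
from position `0` a `c` is answered by a `c` on the same side of `3W`; so no MTL formula
separates them.
-/

/-- Integers extended with `-∞` (`⊥`) and `+∞` (`⊤`), used as interval endpoints. -/
abbrev EIntB := WithBot (WithTop ℤ)

def EIntB.ofInt (n : ℤ) : EIntB := ((n : WithTop ℤ) : EIntB)

/-- An interval of integers, given by two (possibly infinite) endpoints and
openness flags. -/
structure Iv where
  lo : EIntB
  hi : EIntB
  loOpen : Bool
  hiOpen : Bool

/-- Membership of an integer in an interval. -/
def Iv.mem (I : Iv) (d : ℤ) : Prop :=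
  (if I.loOpen then I.lo < EIntB.ofInt d else I.lo ≤ EIntB.ofInt d) ∧
  (if I.hiOpen then EIntB.ofInt d < I.hi else EIntB.ofInt d ≤ I.hi)

/-- The interval `(-∞, +∞)`. -/
def Iv.univ : Iv := ⟨⊥, ⊤, true, true⟩

/-- The singleton interval `[n, n]`. -/
def Iv.pt (n : ℤ) : Iv := ⟨EIntB.ofInt n, EIntB.ofInt n, false, false⟩

/-- A data word: an infinite sequence of pairs of a set of propositions and a
natural number data value. -/
abbrev DataWord (P : Type) := ℕ → (Set P) × ℕ

/-- Syntax of MTL: atoms, negation, conjunction, and interval-constrained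
strict until. -/
inductive MTL (P : Type) where
  | atom : P → MTL P
  | neg  : MTL P → MTL P
  | and  : MTL P → MTL P → MTL P
  | untl : MTL P → Iv → MTL P → MTL P

/-- Satisfaction of an MTL formula at position `i` of data word `w`. -/
def MTL.sat {P : Type} (w : DataWord P) : ℕ → MTL P → Prop
  | i, .atom p => p ∈ (w i).1
  | i, .neg φ => ¬ MTL.sat w i φ
  | i, .and φ ψ => MTL.sat w i φ ∧ MTL.sat w i ψ
  | i, .untl φ I ψ => ∃ j, i < j ∧ MTL.sat w j ψ ∧
      I.mem (((w j).2 : ℤ) - ((w i).2 : ℤ)) ∧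
      ∀ k, i < k → k < j → MTL.sat w k φ

/-- A data word satisfies an MTL formula if it holds at position `0`. -/
def MTL.models {P : Type} (w : DataWord P) (φ : MTL P) : Prop := MTL.sat w 0 φ

/-- The until rank of an MTL formula. -/
def MTL.urk {P : Type} : MTL P → ℕ
  | .atom _ => 0
  | .neg φ => φ.urk
  | .and φ ψ => max φ.urk ψ.urk
  | .untl φ _ ψ => max φ.urk ψ.urk + 1

/-- All interval endpoints of until operators in the formula lie in `S`. -/
def MTL.endpointsIn {P : Type} : MTL P → Set EIntB → Prop
  | .atom _, _ => True
  | .neg φ, S => φ.endpointsIn S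
  | .and φ ψ, S => φ.endpointsIn S ∧ ψ.endpointsIn S
  | .untl φ I ψ, S => I.lo ∈ S ∧ I.hi ∈ S ∧ φ.endpointsIn S ∧ ψ.endpointsIn S

/-- Syntax of TPTL: atoms, register constraints, negation, conjunction,
strict until, and the freeze quantifier. -/
inductive TPTL (P V : Type) where
  | atom : P → TPTL P V
  | cstr : V → Iv → TPTL P V
  | neg : TPTL P V → TPTL P V
  | and : TPTL P V → TPTL P V → TPTL P V
  | untl : TPTL P V → TPTL P V → TPTL P V
  | freeze : V → TPTL P V → TPTL P V

/-- Satisfaction of a TPTL formula at position `i` of data word `w` under the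
register valuation `ν`. -/
def TPTL.sat {P V : Type} [DecidableEq V] (w : DataWord P) :
    ℕ → (V → ℕ) → TPTL P V → Prop
  | i, _, .atom p => p ∈ (w i).1
  | i, ν, .cstr x I => I.mem (((w i).2 : ℤ) - (ν x : ℤ))
  | i, ν, .neg φ => ¬ TPTL.sat w i ν φ
  | i, ν, .and φ ψ => TPTL.sat w i ν φ ∧ TPTL.sat w i ν ψ
  | i, ν, .untl φ ψ => ∃ j, i < j ∧ TPTL.sat w j ν ψ ∧
      ∀ k, i < k → k < j → TPTL.sat w k ν φ
  | i, ν, .freeze x φ => TPTL.sat w i (Function.update ν x (w i).2) φ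

/-- A data word satisfies a TPTL formula if it holds at position `0` under the
valuation mapping every register to the first data value. -/
def TPTL.models {P V : Type} [DecidableEq V] (w : DataWord P) (φ : TPTL P V) : Prop :=
  TPTL.sat w 0 (fun _ => (w 0).2) φ

/-- The until rank of a TPTL formula. -/
def TPTL.urk {P V : Type} : TPTL P V → ℕ
  | .atom _ => 0
  | .cstr _ _ => 0
  | .neg φ => φ.urk
  | .and φ ψ => max φ.urk ψ.urk
  | .untl φ ψ => max φ.urk ψ.urk + 1
  | .freeze _ φ => φ.urk

/-- All register constraints in the formula are equality tests `x ∈ [0,0]`. -/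
def TPTL.eqOnly {P V : Type} : TPTL P V → Prop
  | .atom _ => True
  | .cstr _ I => I = Iv.pt 0
  | .neg φ => φ.eqOnly
  | .and φ ψ => φ.eqOnly ∧ ψ.eqOnly
  | .untl φ ψ => φ.eqOnly ∧ ψ.eqOnly
  | .freeze _ φ => φ.eqOnly

/-- All endpoints of intervals in register constraints lie in `S`. -/
def TPTL.cstrIn {P V : Type} : TPTL P V → Set EIntB → Prop
  | .atom _, _ => True
  | .cstr _ I, S => I.lo ∈ S ∧ I.hi ∈ S
  | .neg φ, S => φ.cstrIn S
  | .and φ ψ, S => φ.cstrIn S ∧ ψ.cstrIn S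
  | .untl φ ψ, S => φ.cstrIn S ∧ ψ.cstrIn S
  | .freeze _ φ, S => φ.cstrIn S

/-- A TPTL truth constant: `x ∈ (-∞, +∞)`. -/
def ttu : TPTL Bool Unit := .cstr () Iv.univ

/-- The eventually operator `F φ := true U φ` (strict). -/
def Fu (φ : TPTL Bool Unit) : TPTL Bool Unit := .untl ttu φ

/-- The interval `(-∞, 2]`. -/
def le2 : Iv := ⟨⊥, EIntB.ofInt 2, true, false⟩

/-- The formula `x.F (b ∧ F (c ∧ x ≤ 2))`, with `b` the atom `true` and `c`
the atom `false` of `Bool`. -/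
def xFbFc : TPTL Bool Unit :=
  .freeze () (Fu (.and (.atom true) (Fu (.and (.atom false) (.cstr () le2)))))

def EIntB.natAbs : EIntB → ℕ
  | some (some n) => n.natAbs
  | _ => 0

theorem MTL.endpointsIn_mono {P : Type} {S T : Set EIntB} (hST : S ⊆ T) (φ : MTL P)
    (h : φ.endpointsIn S) : φ.endpointsIn T := by
  induction φ with
  | atom => trivial
  | neg φ ih => exact ih h
  | and φ ψ ihφ ihψ => exact ⟨ihφ h.1, ihψ h.2⟩
  | untl φ I ψ ihφ ihψ => exact ⟨hST h.1, hST h.2.1, ihφ h.2.2.1, ihψ h.2.2.2⟩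

theorem MTL.exists_endpointsIn_natAbs_le {P : Type} :
    ∀ φ : MTL P, ∃ B, φ.endpointsIn {e | e.natAbs ≤ B}
  | .atom _ => ⟨0, trivial⟩
  | .neg φ => φ.exists_endpointsIn_natAbs_le
  | .and φ ψ => by
    obtain ⟨B₁, h₁⟩ := φ.exists_endpointsIn_natAbs_le
    obtain ⟨B₂, h₂⟩ := ψ.exists_endpointsIn_natAbs_le
    refine ⟨max B₁ B₂, endpointsIn_mono ?_ _ h₁, endpointsIn_mono ?_ _ h₂⟩ <;>
      intro e he <;> simp only [Set.mem_ofPred_eq] at he ⊢ <;> omega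
  | .untl φ I ψ => by
    obtain ⟨B₁, h₁⟩ := φ.exists_endpointsIn_natAbs_le
    obtain ⟨B₂, h₂⟩ := ψ.exists_endpointsIn_natAbs_le
    refine ⟨max (max I.lo.natAbs I.hi.natAbs) (max B₁ B₂), by simp, by simp,
      endpointsIn_mono ?_ _ h₁, endpointsIn_mono ?_ _ h₂⟩ <;>
      intro e he <;> simp only [Set.mem_ofPred_eq] at he ⊢ <;> omega

def SameSide (B : ℕ) (x y : ℤ) : Prop :=
  x = y ∨ (B < x ∧ B < y) ∨ (x < -B ∧ y < -B)

theorem le_ofInt_iff_of_sameSide {B : ℕ} {e : EIntB} (he : e.natAbs ≤ B) {x y : ℤ}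
    (h : SameSide B x y) : e ≤ EIntB.ofInt x ↔ e ≤ EIntB.ofInt y := by
  induction e using WithBot.recBotCoe with
  | bot => simp
  | coe a =>
    induction a using WithTop.recTopCoe with
    | top => simp [EIntB.ofInt]
    | coe n =>
      change n.natAbs ≤ B at he
      simp only [EIntB.ofInt, WithBot.coe_le_coe, WithTop.coe_le_coe]
      unfold SameSide at h
      omega

theorem ofInt_le_iff_of_sameSide {B : ℕ} {e : EIntB} (he : e.natAbs ≤ B) {x y : ℤ}
    (h : SameSide B x y) : EIntB.ofInt x ≤ e ↔ EIntB.ofInt y ≤ e := by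
  induction e using WithBot.recBotCoe with
  | bot => simp [EIntB.ofInt]
  | coe a =>
    induction a using WithTop.recTopCoe with
    | top => simp [EIntB.ofInt]
    | coe n =>
      change n.natAbs ≤ B at he
      simp only [EIntB.ofInt, WithBot.coe_le_coe, WithTop.coe_le_coe]
      unfold SameSide at h
      omega

theorem Iv.mem_iff_of_sameSide {B : ℕ} {I : Iv} (hlo : I.lo.natAbs ≤ B) (hhi : I.hi.natAbs ≤ B)
    {x y : ℤ} (h : SameSide B x y) : I.mem x ↔ I.mem y := by
  unfold Iv.mem
  cases I.loOpen <;> cases I.hiOpen <;>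
    simp only [Bool.false_eq_true, if_true, if_false, ← not_le,
      le_ofInt_iff_of_sameSide hlo h, le_ofInt_iff_of_sameSide hhi h,
      ofInt_le_iff_of_sameSide hlo h, ofInt_le_iff_of_sameSide hhi h]

theorem sameSide_mul_of_sign_eq {B W : ℕ} (hBW : B < W) {x y : ℤ} (h : x.sign = y.sign) :
    SameSide B (W * x) (W * y) := by
  rcases lt_trichotomy x 0 with hx | rfl | hx
  · have hy : y < 0 := Int.sign_eq_neg_one_iff_neg.mp (h ▸ Int.sign_eq_neg_one_of_neg hx)
    right; right; constructor <;> nlinarith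
  · left; rw [Int.sign_zero, eq_comm, Int.sign_eq_zero_iff_zero] at h; rw [h]
  · have hy : 0 < y := Int.sign_eq_one_iff_pos.mp (h ▸ Int.sign_eq_one_of_pos hx)
    right; left; constructor <;> nlinarith

namespace MTL

variable {P : Type}

def IsUntilSim (S : Set EIntB) (w w' : DataWord P) (R : ℕ → ℕ → Prop) : Prop :=
  ∀ i j, R i j → (w i).1 = (w' j).1 ∧
    ∀ k, i < k → ∃ k', j < k' ∧ R k k' ∧
      (∀ I : Iv, I.lo ∈ S → I.hi ∈ S →
        (I.mem (((w k).2 : ℤ) - (w i).2) ↔ I.mem (((w' k').2 : ℤ) - (w' j).2))) ∧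
      ∀ m', j < m' → m' < k' → ∃ m, i < m ∧ m < k ∧ R m m'

theorem sat_untl_of_isUntilSim {S : Set EIntB} {w w' : DataWord P} {R : ℕ → ℕ → Prop}
    (hR : IsUntilSim S w w' R) {φ ψ : MTL P} {I : Iv} (hlo : I.lo ∈ S) (hhi : I.hi ∈ S)
    (hφ : ∀ i j, R i j → (sat w i φ ↔ sat w' j φ))
    (hψ : ∀ i j, R i j → (sat w i ψ ↔ sat w' j ψ))
    {i j : ℕ} (hij : R i j) (h : sat w i (.untl φ I ψ)) : sat w' j (.untl φ I ψ) := by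
  obtain ⟨k, hik, hψk, hIk, hφk⟩ := h
  obtain ⟨k', hjk', hkk', hI, hbetween⟩ := (hR i j hij).2 k hik
  refine ⟨k', hjk', (hψ k k' hkk').mp hψk, (hI I hlo hhi).mp hIk, fun m' hjm' hm'k' => ?_⟩
  obtain ⟨m, him, hmk, hmm'⟩ := hbetween m' hjm' hm'k'
  exact (hφ m m' hmm').mp (hφk m him hmk)

theorem sat_iff_of_isUntilSim {S : Set EIntB} {w w' : DataWord P} {R : ℕ → ℕ → Prop}
    (hsymm : ∀ i j, R i j → R j i) (hR : IsUntilSim S w w' R) (hR' : IsUntilSim S w' w R)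
    (φ : MTL P) (hφ : φ.endpointsIn S) {i j : ℕ} (hij : R i j) :
    sat w i φ ↔ sat w' j φ := by
  induction φ generalizing i j with
  | atom p => simp only [sat, (hR i j hij).1]
  | neg φ ih => exact not_congr (ih hφ hij)
  | and φ ψ ihφ ihψ => exact and_congr (ihφ hφ.1 hij) (ihψ hφ.2 hij)
  | untl φ I ψ ihφ ihψ =>
    obtain ⟨hlo, hhi, hφ, hψ⟩ := hφ
    exact ⟨sat_untl_of_isUntilSim hR hlo hhi (fun _ _ => ihφ hφ) (fun _ _ => ihψ hψ) hij,
      sat_untl_of_isUntilSim hR' hlo hhi (fun _ _ h => (ihφ hφ (hsymm _ _ h)).symm)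
        (fun _ _ h => (ihψ hψ (hsymm _ _ h)).symm) (hsymm _ _ hij)⟩

end MTL

theorem TPTL.models_xFbFc_iff (w : DataWord Bool) :
    TPTL.models w xFbFc ↔ ∃ j, 0 < j ∧ true ∈ (w j).1 ∧
      ∃ k, j < k ∧ false ∈ (w k).1 ∧ ((w k).2 : ℤ) - (w 0).2 ≤ 2 := by
  have huniv (z : ℤ) : Iv.univ.mem z :=
    ⟨WithBot.bot_lt_coe _, WithBot.coe_lt_coe.mpr (WithTop.coe_lt_top z)⟩
  have hle2 (z : ℤ) : le2.mem z ↔ z ≤ 2 := by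
    simp only [Iv.mem, le2, EIntB.ofInt, if_true, Bool.false_eq_true, if_false,
      WithBot.bot_lt_coe, true_and, WithBot.coe_le_coe, WithTop.coe_le_coe]
  simp only [TPTL.models, xFbFc, Fu, ttu, TPTL.sat, huniv, hle2, Function.update_self,
    implies_true, and_true]

namespace Staircase

def label (i : ℕ) : Set Bool :=
  if i = 0 then ∅ else if i % 2 = 1 then {false} else {true}

def shape (h : ℕ) (s : ℕ → ℕ) (i : ℕ) : ℕ :=
  if i = 0 then h else if i % 2 = 1 then s (i / 2) else 0

def word (W h : ℕ) (s : ℕ → ℕ) : DataWord Bool := fun i => (label i, W * shape h s i)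

def Matched (i j : ℕ) : Prop := (i = 0 ↔ j = 0) ∧ i % 2 = j % 2

structure IsCValues (h : ℕ) (s : ℕ → ℕ) : Prop where
  strictMono : StrictMono s
  pos : 0 < s 0
  first_lt : s 0 < h
  ne : ∀ n, s n ≠ h

variable {h : ℕ} {s s' : ℕ → ℕ}

theorem Matched.symm {i j : ℕ} (hij : Matched i j) : Matched j i :=
  ⟨hij.1.symm, hij.2.symm⟩

theorem label_eq_of_matched {i j : ℕ} (hij : Matched i j) : label i = label j := by
  simp only [label, hij.1, hij.2]

theorem shape_zero : shape h s 0 = h := rfl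

theorem shape_of_odd {i : ℕ} (hi : i % 2 = 1) : shape h s i = s (i / 2) := by
  simp [shape, hi, show i ≠ 0 by omega]

theorem shape_of_even {i : ℕ} (hi0 : i ≠ 0) (hi : i % 2 = 0) : shape h s i = 0 := by
  simp [shape, hi, hi0]

theorem sign_shape_sub {i k : ℕ} (hs : IsCValues h s) (hi : 0 < i) (hik : i < k) :
    ((shape h s k : ℤ) - shape h s i).sign =
      if k % 2 = 1 then 1 else if i % 2 = 1 then -1 else 0 := by
  have hs0 (n : ℕ) : 0 < s n := hs.pos.trans_le (hs.strictMono.monotone (Nat.zero_le n))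
  rcases Nat.mod_two_eq_zero_or_one k with hk | hk <;>
    rcases Nat.mod_two_eq_zero_or_one i with hi2 | hi2
  · rw [shape_of_even (by omega) hk, shape_of_even (by omega) hi2, if_neg (by omega),
      if_neg (by omega), sub_self, Int.sign_zero]
  · rw [shape_of_even (by omega) hk, shape_of_odd hi2, if_neg (by omega), if_pos hi2]
    exact Int.sign_eq_neg_one_of_neg (by have := hs0 (i / 2); omega)
  · rw [shape_of_odd hk, shape_of_even (by omega) hi2, if_pos hk]
    exact Int.sign_eq_one_of_pos (by have := hs0 (k / 2); omega)
  · rw [shape_of_odd hk, shape_of_odd hi2, if_pos hk]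
    exact Int.sign_eq_one_of_pos (by have := hs.strictMono (show i / 2 < k / 2 by omega); omega)

/-- `k'` answers the move `k` from `i` in the until game played at `(i, j)`. -/
def SignAnswer (h : ℕ) (s s' : ℕ → ℕ) (i j k k' : ℕ) : Prop :=
  j < k' ∧ Matched k k' ∧
    ((shape h s k : ℤ) - shape h s i).sign = ((shape h s' k' : ℤ) - shape h s' j).sign ∧
    ∀ m', j < m' → m' < k' → ∃ m, i < m ∧ m < k ∧ Matched m m'

theorem signAnswer_shift (hs : IsCValues h s) (hs' : IsCValues h s') {i j k : ℕ}
    (hi : 0 < i) (hij : Matched i j) (hik : i < k) :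
    SignAnswer h s s' i j k (j + (k - i)) := by
  obtain ⟨hzero, hpar⟩ := hij
  have hj : 0 < j := Nat.pos_of_ne_zero fun hj => hi.ne' (hzero.mpr hj)
  refine ⟨by omega, ⟨by omega, by omega⟩, ?_, fun m' hjm' hm'k' =>
    ⟨i + (m' - j), by omega, by omega, by omega, by omega⟩⟩
  rw [sign_shape_sub hs hi hik, sign_shape_sub hs' hj (by omega),
    show (j + (k - i)) % 2 = k % 2 by omega, hpar]

theorem exists_signAnswer_zero (hs : IsCValues h s) (hs' : IsCValues h s') {k : ℕ}
    (hk : 0 < k) : ∃ k', SignAnswer h s s' 0 0 k k' := by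
  -- Answer by a position of the same kind on the same side of `h`; every position it skips is
  -- matched by `1` or `2`, which the move `k` skips as well.
  rcases Nat.mod_two_eq_zero_or_one k with hk2 | hk2
  · refine ⟨2, by omega, ⟨by omega, by omega⟩, ?_,
      fun m' _ _ => ⟨1, by omega, by omega, by omega, by omega⟩⟩
    rw [shape_of_even (i := k) (by omega) hk2, shape_of_even (i := 2) (by omega) (by omega),
      shape_zero, shape_zero]
  have hk' : shape h s k = s (k / 2) := shape_of_odd hk2
  rcases lt_or_gt_of_ne (hs.ne (k / 2)) with hlt | hgt
  · refine ⟨1, by omega, ⟨by omega, by omega⟩, ?_, fun m' _ _ => by omega⟩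
    rw [hk', shape_of_odd (i := 1) (by omega), show 1 / 2 = 0 from rfl, shape_zero, shape_zero,
      Int.sign_eq_neg_one_of_neg (by omega),
      Int.sign_eq_neg_one_of_neg (by have := hs'.first_lt; omega)]
  · have hk3 : 3 ≤ k := by
      have : k / 2 ≠ 0 := fun h0 => by have := hs.first_lt; rw [h0] at hgt; omega
      omega
    have hs'h : h < s' h := lt_of_le_of_ne (hs'.strictMono.id_le h) (hs'.ne h).symm
    refine ⟨2 * h + 1, by omega, ⟨by omega, by omega⟩, ?_,
      fun m' _ _ => ⟨2 - m' % 2, by omega, by omega, by omega, by omega⟩⟩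
    rw [hk', shape_of_odd (i := 2 * h + 1) (by omega),
      show (2 * h + 1) / 2 = h by omega, shape_zero, shape_zero,
      Int.sign_eq_one_of_pos (by omega), Int.sign_eq_one_of_pos (by omega)]

theorem isUntilSim_word {B W : ℕ} (hBW : B < W) (hs : IsCValues h s) (hs' : IsCValues h s') :
    MTL.IsUntilSim {e | e.natAbs ≤ B} (word W h s) (word W h s') Matched := by
  intro i j hij
  refine ⟨label_eq_of_matched hij, fun k hik => ?_⟩
  obtain ⟨k', hjk', hkk', hsign, hbetween⟩ : ∃ k', SignAnswer h s s' i j k k' := by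
    rcases Nat.eq_zero_or_pos i with rfl | hi
    · obtain rfl : j = 0 := hij.1.mp rfl
      exact exists_signAnswer_zero hs hs' hik
    · exact ⟨_, signAnswer_shift hs hs' hi hij hik⟩
  refine ⟨k', hjk', hkk', fun I hlo hhi => Iv.mem_iff_of_sameSide hlo hhi ?_, hbetween⟩
  simp only [word]
  push_cast
  rw [← mul_sub, ← mul_sub]
  exact sameSide_mul_of_sign_eq hBW hsign

theorem models_word_iff {B W : ℕ} (hBW : B < W) (hs : IsCValues h s) (hs' : IsCValues h s')
    {φ : MTL Bool} (hφ : φ.endpointsIn {e | e.natAbs ≤ B}) :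
    MTL.models (word W h s) φ ↔ MTL.models (word W h s') φ :=
  MTL.sat_iff_of_isUntilSim (fun _ _ => Matched.symm) (isUntilSim_word hBW hs hs')
    (isUntilSim_word hBW hs' hs) φ hφ ⟨Iff.rfl, rfl⟩

theorem true_mem_label {i : ℕ} : true ∈ label i ↔ i ≠ 0 ∧ i % 2 = 0 := by
  unfold label
  split_ifs <;> simp_all

theorem false_mem_label {i : ℕ} : false ∈ label i ↔ i % 2 = 1 := by
  unfold label
  split_ifs <;> simp_all

def oneBelow (n : ℕ) : ℕ := if n = 0 then 1 else n + 3

def twoBelow (n : ℕ) : ℕ := if n ≤ 1 then n + 1 else n + 2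

theorem isCValues_oneBelow : IsCValues 3 oneBelow where
  strictMono := strictMono_nat_of_lt_succ fun n => by cases n <;> simp [oneBelow]
  pos := by decide
  first_lt := by decide
  ne n := by unfold oneBelow; split_ifs <;> omega

theorem isCValues_twoBelow : IsCValues 3 twoBelow where
  strictMono := strictMono_nat_of_lt_succ fun n => by unfold twoBelow; split_ifs <;> omega
  pos := by decide
  first_lt := by decide
  ne n := by unfold twoBelow; split_ifs <;> omega

theorem models_xFbFc_twoBelow (W : ℕ) : TPTL.models (word W 3 twoBelow) xFbFc := by
  refine (TPTL.models_xFbFc_iff _).mpr ⟨2, by omega, (true_mem_label (i := 2)).mpr (by omega),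
    3, by omega, (false_mem_label (i := 3)).mpr rfl, ?_⟩
  simp only [word, shape_of_odd (show 3 % 2 = 1 from rfl), shape_zero,
    show twoBelow (3 / 2) = 2 from rfl]
  omega

theorem not_models_xFbFc_oneBelow {W : ℕ} (hW : 3 ≤ W) :
    ¬ TPTL.models (word W 3 oneBelow) xFbFc := by
  rw [TPTL.models_xFbFc_iff]
  rintro ⟨j, hj, hbj, k, hjk, hck, hdata⟩
  have hj2 := true_mem_label.mp hbj
  have hk2 := false_mem_label.mp hck
  have hfar : W * 4 ≤ W * oneBelow (k / 2) :=
    Nat.mul_le_mul_left W (by unfold oneBelow; split_ifs <;> omega)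
  simp only [word, shape_of_odd hk2, shape_zero] at hdata
  omega

end Staircase

/-- The TPTL formula `x.F (b ∧ F (c ∧ x ≤ 2))` is not definable in MTL. -/
theorem xFbFc_not_mtl_definable :
    ¬ ∃ φ : MTL Bool, ∀ w : DataWord Bool,
      MTL.models w φ ↔ TPTL.models w xFbFc := by
  rintro ⟨φ, hφ⟩
  obtain ⟨B, hB⟩ := φ.exists_endpointsIn_natAbs_le
  have hmtl := Staircase.models_word_iff (lt_add_of_pos_right B three_pos)
    Staircase.isCValues_oneBelow Staircase.isCValues_twoBelow hB
  exact Staircase.not_models_xFbFc_oneBelow (Nat.le_add_left 3 B)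
    ((hφ _).mp (hmtl.mpr ((hφ _).mpr (Staircase.models_xFbFc_twoBelow _))))
end

section
/- MTL and TPTL^eq are incomparable in expressive power: the TPTL^eq formula x.F F F (x = 0) is not MTL-definable, and the MTL formula F_{=1} true is not TPTL^eq-definable. -/
/-- A TPTL truth constant over `Bool` (using no register constraints). -/
def ttB : TPTL Bool ℕ := .neg (.and (.atom true) (.neg (.atom true)))

/-- The eventually operator `F φ := true U φ` (strict). -/
def FB (φ : TPTL Bool ℕ) : TPTL Bool ℕ := .untl ttB φ

/-- The `TPTL^eq` formula `x.F F F (x = 0)`. -/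
def xFFFB : TPTL Bool ℕ :=
  .freeze 0 (FB (FB (FB (.cstr 0 (Iv.pt 0)))))

/-- An MTL truth constant over `Bool`. -/
def mttB : MTL Bool := .neg (.and (.atom true) (.neg (.atom true)))

/-- The MTL formula `F_{=1} true`. -/
def Feq1 : MTL Bool := .untl mttB (Iv.pt 1) mttB

/-!
An MTL formula only compares data differences with the finitely many endpoints of its
intervals, so it cannot separate two differences that are equal, or both above `M`, or both
below `-M`, once `M` bounds those endpoints. With `K > M`, the data words
`2K, 0, K, 2K, 3K, …` and `2K, 0, 2K, 3K, …` are then related by the bisimulation matching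
position `0` with `0` and all later positions with each other, although only the first one
returns to its initial value after at least three steps.

Conversely, `TPTL^eq` only tests data values for equality, so it cannot see an injective
renaming of the data such as doubling, which destroys every difference equal to `1`.
-/

def ThresholdEquiv (M : ℕ) (v v' : ℤ) : Prop :=
  v = v' ∨ (M < v ∧ M < v') ∨ (v < -M ∧ v' < -M)

theorem ThresholdEquiv.symm {M : ℕ} {v v' : ℤ} (h : ThresholdEquiv M v v') :
    ThresholdEquiv M v' v := by
  unfold ThresholdEquiv at *
  omega

def EIntB.absBound (e : EIntB) : ℕ := (WithTop.untopD 0 (WithBot.unbotD 0 e)).natAbs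

theorem EIntB.lt_congr_of_thresholdEquiv {e : EIntB} {M : ℕ} (he : e.absBound ≤ M)
    {v v' : ℤ} (h : ThresholdEquiv M v v') :
    (e < ofInt v ↔ e < ofInt v') ∧ (ofInt v < e ↔ ofInt v' < e) := by
  induction e using WithBot.recBotCoe with
  | bot => simp [ofInt]
  | coe t =>
    induction t using WithTop.recTopCoe with
    | top => simp [ofInt, -WithBot.coe_top, WithBot.coe_lt_coe]
    | coe n =>
      simp only [absBound, WithBot.unbotD_coe, WithTop.untopD_coe] at he
      simp only [ofInt, WithBot.coe_lt_coe, WithTop.coe_lt_coe]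
      unfold ThresholdEquiv at h
      omega

theorem Iv.mem_congr_of_thresholdEquiv {I : Iv} {M : ℕ} (hlo : I.lo.absBound ≤ M)
    (hhi : I.hi.absBound ≤ M) {v v' : ℤ} (h : ThresholdEquiv M v v') :
    I.mem v ↔ I.mem v' := by
  obtain ⟨hlo₁, hlo₂⟩ := EIntB.lt_congr_of_thresholdEquiv hlo h
  obtain ⟨hhi₁, hhi₂⟩ := EIntB.lt_congr_of_thresholdEquiv hhi h
  simp only [Iv.mem, ← not_lt, hlo₁, hlo₂, hhi₁, hhi₂]

theorem Iv.mem_pt {n v : ℤ} : (Iv.pt n).mem v ↔ v = n := by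
  simp only [Iv.pt, Iv.mem, Bool.false_eq_true, if_false, EIntB.ofInt, WithBot.coe_le_coe,
    WithTop.coe_le_coe]
  omega

def MTL.endpointBound {P : Type} : MTL P → ℕ
  | .atom _ => 0
  | .neg φ => φ.endpointBound
  | .and φ ψ => max φ.endpointBound ψ.endpointBound
  | .untl φ I ψ => max (max I.lo.absBound I.hi.absBound) (max φ.endpointBound ψ.endpointBound)

/-- A relation between positions of `w` and `w'` that can answer every move of an
Ehrenfeucht–Fraïssé game for strict until whose intervals have endpoints bounded by `M`. -/
structure MTL.Bisim {P : Type} (M : ℕ) (w w' : DataWord P) (R : ℕ → ℕ → Prop) : Prop where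
  props_eq : ∀ {i i'}, R i i' → (w i).1 = (w' i').1
  forth : ∀ {i i'}, R i i' → ∀ j, i < j → ∃ j', i' < j' ∧ R j j' ∧
    ThresholdEquiv M ((w j).2 - (w i).2) ((w' j').2 - (w' i').2) ∧
    ∀ k', i' < k' → k' < j' → ∃ k, i < k ∧ k < j ∧ R k k'
  back : ∀ {i i'}, R i i' → ∀ j', i' < j' → ∃ j, i < j ∧ R j j' ∧
    ThresholdEquiv M ((w j).2 - (w i).2) ((w' j').2 - (w' i').2) ∧
    ∀ k, i < k → k < j → ∃ k', i' < k' ∧ k' < j' ∧ R k k'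

namespace MTL.Bisim

variable {P : Type} {M : ℕ} {w w' : DataWord P} {R : ℕ → ℕ → Prop}

theorem symm (h : Bisim M w w' R) : Bisim M w' w (flip R) where
  props_eq hR := (h.props_eq hR).symm
  forth hR j hj := by
    obtain ⟨j', hj', hR', hd, hbetween⟩ := h.back hR j hj
    exact ⟨j', hj', hR', hd.symm, hbetween⟩
  back hR j' hj' := by
    obtain ⟨j, hj, hR', hd, hbetween⟩ := h.forth hR j' hj'
    exact ⟨j, hj, hR', hd.symm, hbetween⟩

theorem sat_of_sat (h : Bisim M w w' R) {φ : MTL P} (hφ : φ.endpointBound ≤ M) {i i' : ℕ}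
    (hR : R i i') (hsat : MTL.sat w i φ) : MTL.sat w' i' φ := by
  induction φ generalizing w w' R i i' with
  | atom p => exact (h.props_eq hR ▸ hsat : p ∈ (w' i').1)
  | neg φ ih => exact fun hsat' => hsat (ih h.symm hφ hR hsat')
  | and φ ψ ihφ ihψ =>
    simp only [endpointBound, max_le_iff] at hφ
    exact ⟨ihφ h hφ.1 hR hsat.1, ihψ h hφ.2 hR hsat.2⟩
  | untl φ I ψ ihφ ihψ =>
    simp only [endpointBound, max_le_iff] at hφ
    obtain ⟨⟨hlo, hhi⟩, hφ, hψ⟩ := hφ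
    obtain ⟨j, hij, hψj, hI, hφk⟩ := hsat
    obtain ⟨j', hij', hR', hd, hbetween⟩ := h.forth hR j hij
    refine ⟨j', hij', ihψ h hψ hR' hψj, (Iv.mem_congr_of_thresholdEquiv hlo hhi hd).1 hI, ?_⟩
    intro k' hk' hk'j
    obtain ⟨k, hk, hkj, hRk⟩ := hbetween k' hk' hk'j
    exact ihφ h hφ hRk (hφk k hk hkj)

theorem sat_iff (h : Bisim M w w' R) {φ : MTL P} (hφ : φ.endpointBound ≤ M) {i i' : ℕ}
    (hR : R i i') : MTL.sat w i φ ↔ MTL.sat w' i' φ :=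
  ⟨sat_of_sat h hφ hR, sat_of_sat h.symm hφ hR⟩

end MTL.Bisim

theorem ttB_sat (w : DataWord Bool) (i : ℕ) (ν : ℕ → ℕ) : TPTL.sat w i ν ttB := by
  simp [ttB, TPTL.sat]

theorem mttB_sat (w : DataWord Bool) (i : ℕ) : MTL.sat w i mttB := by
  simp [mttB, MTL.sat]

theorem models_xFFFB_iff (w : DataWord Bool) :
    TPTL.models w xFFFB ↔ ∃ j, 3 ≤ j ∧ (w j).2 = (w 0).2 := by
  simp only [TPTL.models, xFFFB, FB, TPTL.sat, Function.update_self, Iv.mem_pt, sub_eq_zero,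
    Nat.cast_inj, ttB_sat, implies_true, and_true]
  constructor
  · rintro ⟨j₁, h₁, j₂, h₂, j, hj, hd⟩
    exact ⟨j, by omega, hd⟩
  · rintro ⟨j, hj, hd⟩
    exact ⟨1, one_pos, 2, one_lt_two, j, by omega, hd⟩

def dataWord (d : ℕ → ℕ) : DataWord Bool := fun i => (∅, d i)

/-- Data `2K, 0, K, 2K, 3K, 4K, …`: the first value comes back at position `3`. -/
def lateReturn (K : ℕ) : ℕ → ℕ
  | 0 => 2 * K
  | i + 1 => i * K

/-- `lateReturn K` with position `2` deleted: `2K, 0, 2K, 3K, …`. -/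
def earlyReturn (K i : ℕ) : ℕ := lateReturn K (if i < 2 then i else i + 1)

theorem lateReturn_add_le (K : ℕ) {i j : ℕ} (hi : 1 ≤ i) (hij : i < j) :
    lateReturn K i + K ≤ lateReturn K j := by
  obtain ⟨a, rfl⟩ : ∃ a, i = a + 1 := ⟨i - 1, by omega⟩
  obtain ⟨b, rfl⟩ : ∃ b, j = b + 1 := ⟨j - 1, by omega⟩
  calc a * K + K = (a + 1) * K := by ring
    _ ≤ b * K := Nat.mul_le_mul_right K (by omega)

theorem earlyReturn_add_le (K : ℕ) {i j : ℕ} (hi : 1 ≤ i) (hij : i < j) :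
    earlyReturn K i + K ≤ earlyReturn K j := by
  unfold earlyReturn
  exact lateReturn_add_le K (by split_ifs <;> omega) (by split_ifs <;> omega)

theorem bisim_lateReturn_earlyReturn (M : ℕ) :
    MTL.Bisim M (dataWord (lateReturn (M + 1))) (dataWord (earlyReturn (M + 1)))
      (fun i i' => i = 0 ↔ i' = 0) := by
  have hA : lateReturn (M + 1) 0 = 2 * (M + 1) ∧ lateReturn (M + 1) 1 = 0 ∧
      lateReturn (M + 1) 2 = M + 1 ∧ lateReturn (M + 1) 3 = 2 * (M + 1) ∧
      lateReturn (M + 1) 4 = 3 * (M + 1) := by simp [lateReturn]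
  have hB : earlyReturn (M + 1) 0 = 2 * (M + 1) ∧ earlyReturn (M + 1) 1 = 0 ∧
      earlyReturn (M + 1) 2 = 2 * (M + 1) ∧ earlyReturn (M + 1) 3 = 3 * (M + 1) := by
    simp [earlyReturn, lateReturn]
  refine ⟨fun _ => rfl, ?_, ?_⟩
  · rintro i i' hR j hij
    simp only [dataWord, ThresholdEquiv]
    rcases Nat.eq_zero_or_pos i with rfl | hi
    · obtain rfl : i' = 0 := hR.1 rfl
      match j, hij with
      | 1, _ => exact ⟨1, one_pos, by omega, by omega, by omega⟩
      | 2, _ => exact ⟨1, one_pos, by omega, by omega, by omega⟩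
      | 3, _ => exact ⟨2, two_pos, by omega, by omega, fun _ _ _ => ⟨1, by omega⟩⟩
      | j + 4, _ =>
        have := lateReturn_add_le (M + 1) (i := 3) (j := j + 4) (by omega) (by omega)
        exact ⟨3, three_pos, by omega, by omega, fun _ _ _ => ⟨1, by omega⟩⟩
    · have hi' : 1 ≤ i' := Nat.pos_of_ne_zero fun h => hi.ne' (hR.2 h)
      have := lateReturn_add_le (M + 1) hi hij
      have := earlyReturn_add_le (M + 1) hi' (Nat.lt_add_one i')
      exact ⟨i' + 1, by omega, by omega, by omega, by omega⟩
  · rintro i i' hR j' hij'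
    simp only [dataWord, ThresholdEquiv]
    rcases Nat.eq_zero_or_pos i' with rfl | hi'
    · obtain rfl : i = 0 := hR.2 rfl
      match j', hij' with
      | 1, _ => exact ⟨1, one_pos, by omega, by omega, by omega⟩
      | 2, _ => exact ⟨3, three_pos, by omega, by omega, fun _ _ _ => ⟨1, by omega⟩⟩
      | j' + 3, _ =>
        have := earlyReturn_add_le (M + 1) (i := 2) (j := j' + 3) (by omega) (by omega)
        exact ⟨4, four_pos, by omega, by omega, fun _ _ _ => ⟨1, by omega⟩⟩
    · have hi : 1 ≤ i := Nat.pos_of_ne_zero fun h => hi'.ne' (hR.1 h)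
      have := lateReturn_add_le (M + 1) hi (Nat.lt_add_one i)
      have := earlyReturn_add_le (M + 1) hi' hij'
      exact ⟨i + 1, by omega, by omega, by omega, by omega⟩

theorem xFFFB_not_mtlDefinable :
    ¬ ∃ φ : MTL Bool, ∀ w : DataWord Bool, MTL.models w φ ↔ TPTL.models w xFFFB := by
  rintro ⟨φ, hφ⟩
  set M := φ.endpointBound
  have hlate : TPTL.models (dataWord (lateReturn (M + 1))) xFFFB :=
    (models_xFFFB_iff _).2 ⟨3, le_rfl, rfl⟩
  have hearly : ¬ TPTL.models (dataWord (earlyReturn (M + 1))) xFFFB := by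
    rw [models_xFFFB_iff]
    rintro ⟨j, hj, hd⟩
    have hgap := earlyReturn_add_le (M + 1) (i := 2) one_le_two hj
    have h₀ : earlyReturn (M + 1) 0 = 2 * (M + 1) := rfl
    have h₂ : earlyReturn (M + 1) 2 = 2 * (M + 1) := rfl
    simp only [dataWord] at hd
    omega
  have hsame := (bisim_lateReturn_earlyReturn M).sat_iff (φ := φ) le_rfl (i := 0) (i' := 0) .rfl
  exact hearly ((hφ _).1 (hsame.1 ((hφ _).2 hlate)))

theorem TPTL.sat_map_data_iff {P V : Type} [DecidableEq V] {f : ℕ → ℕ}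
    (hf : Function.Injective f) (w : DataWord P) {φ : TPTL P V} (hφ : φ.eqOnly) (i : ℕ)
    (ν : V → ℕ) :
    TPTL.sat (fun n => ((w n).1, f (w n).2)) i (f ∘ ν) φ ↔ TPTL.sat w i ν φ := by
  induction φ generalizing i ν with
  | atom p => rfl
  | cstr x I =>
    obtain rfl : I = Iv.pt 0 := hφ
    simp only [TPTL.sat, Iv.mem_pt, sub_eq_zero, Nat.cast_inj, Function.comp_apply, hf.eq_iff]
  | neg φ ih => exact not_congr (ih hφ i ν)
  | and φ ψ ihφ ihψ => exact and_congr (ihφ hφ.1 i ν) (ihψ hφ.2 i ν)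
  | untl φ ψ ihφ ihψ =>
    simp only [TPTL.sat, ihφ hφ.1, ihψ hφ.2]
  | freeze x φ ih =>
    simp only [TPTL.sat, ← Function.comp_update, ih hφ]

theorem TPTL.models_map_data_iff {P V : Type} [DecidableEq V] {f : ℕ → ℕ}
    (hf : Function.Injective f) (w : DataWord P) {φ : TPTL P V} (hφ : φ.eqOnly) :
    TPTL.models (fun n => ((w n).1, f (w n).2)) φ ↔ TPTL.models w φ :=
  TPTL.sat_map_data_iff hf w hφ 0 _

theorem models_Feq1_iff (w : DataWord Bool) :
    MTL.models w Feq1 ↔ ∃ j, 0 < j ∧ ((w j).2 : ℤ) - (w 0).2 = 1 := by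
  simp [MTL.models, Feq1, MTL.sat, mttB_sat, Iv.mem_pt]

theorem Feq1_not_tptlEqDefinable :
    ¬ ∃ ψ : TPTL Bool ℕ, TPTL.eqOnly ψ ∧
      ∀ w : DataWord Bool, TPTL.models w ψ ↔ MTL.models w Feq1 := by
  rintro ⟨ψ, hψ, hdef⟩
  have hdouble : Function.Injective (2 * · : ℕ → ℕ) := fun _ _ h => by simpa using h
  have hid : MTL.models (dataWord id) Feq1 :=
    (models_Feq1_iff _).2 ⟨1, one_pos, by simp [dataWord]⟩
  have hdoubled : ¬ MTL.models (dataWord (2 * ·)) Feq1 := by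
    rw [models_Feq1_iff]
    rintro ⟨j, -, hj⟩
    simp only [dataWord] at hj
    omega
  exact hdoubled ((hdef _).1 ((TPTL.models_map_data_iff hdouble _ hψ).2 ((hdef _).2 hid)))

/-- MTL and `TPTL^eq` are incomparable: the `TPTL^eq` formula
`x.F F F (x = 0)` is not MTL-definable, and the MTL formula `F_{=1} true` is
not `TPTL^eq`-definable. -/
theorem mtl_tptleq_incomparable :
    TPTL.eqOnly xFFFB ∧
    (¬ ∃ φ : MTL Bool,
        ∀ w : DataWord Bool, MTL.models w φ ↔ TPTL.models w xFFFB) ∧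
    (¬ ∃ ψ : TPTL Bool ℕ, TPTL.eqOnly ψ ∧
        ∀ w : DataWord Bool, TPTL.models w ψ ↔ MTL.models w Feq1) :=
  ⟨by simp [xFFFB, FB, ttB, TPTL.eqOnly], xFFFB_not_mtlDefinable, Feq1_not_tptlEqDefinable⟩
end
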